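/- (Periodicity theorem for real Clifford algebras.) For all natural numbers p and q, the real Clifford algebra Cℓ(p+8, q) is isomorphic as an ℝ-algebra to the tensor product Cℓ(p, q) ⊗_ℝ Cℓ(8, 0). Here Cℓ(p, q) denotes the Clifford algebra of the quadratic form on ℝ^(p+q) given as a weighted sum of squares with p weights equal to +1 and q weights equal to −1. -/

import Mathlib

open scoped TensorProduct

/-- The Clifford algebra of signature `(p, q)`. -/
noncomputable def Qpq (p q : ℕ) : QuadraticForm ℝ (Fin (p + q) → ℝ) :=
  QuadraticMap.weightedSumSquares ℝ (fun i => if (i : ℕ) < p then (1 : ℝ) else -1)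

/-!
Let `ω ∈ Cℓ(Q₂)` be even, with `ω² = 1`, anticommuting with every vector of `Q₂`. Then
`(m₁, m₂) ↦ ι m₁ ⊗ ω + 1 ⊗ ι m₂` satisfies the Clifford relation of `Q₁ ⊕ Q₂` (the cross
terms `ι m₁ ⊗ (ω ι m₂ + ι m₂ ω)` vanish), and lifts to `Cℓ(Q₁ ⊕ Q₂) → Cℓ(Q₁) ⊗ Cℓ(Q₂)`.
The inverse sends `ι m₁ ⊗ 1 ↦ ι m₁ ω` and `1 ⊗ ι m₂ ↦ ι m₂`: evenness of `ω` makes `ι m₁ ω`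
square to `Q₁ m₁`, and anticommutation makes it commute with `Cℓ(Q₂)`.

For `Cℓ(r, 0)` the product `ω = e₀ ⋯ e_{r-1}` of the standard generators satisfies
`ω² = (-1)^(r(r-1)/2)` and `ω eᵢ = (-1)^(r-1) eᵢ ω`, so it qualifies as soon as `4 ∣ r`,
e.g. `r = 8`. Reordering coordinates identifies `Q_{p+8,q}` with `Q_{p,q} ⊕ Q_{8,0}`.
-/

section AnticommutingProducts
variable {A : Type*} [Ring A]

theorem List.prod_mul_of_forall_anticomm {x : A} {l : List A} (h : ∀ a ∈ l, a * x = -(x * a)) :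
    l.prod * x = (-1 : ℤˣ) ^ l.length • (x * l.prod) := by
  induction l with
  | nil => simp
  | cons a t ih =>
    rw [List.forall_mem_cons] at h
    simp only [List.prod_cons, List.length_cons, mul_assoc, ih h.2, mul_smul_comm,
      ← mul_assoc a x, h.1, pow_succ, mul_smul, neg_mul, Units.neg_smul, one_smul, smul_neg]

theorem List.prod_mul_of_pairwise_anticomm_of_mem {x : A} {l : List A}
    (hl : l.Pairwise fun a b => a * b = -(b * a)) (hx : x ∈ l) :
    l.prod * x = (-1 : ℤˣ) ^ (l.length + 1) • (x * l.prod) := by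
  obtain ⟨s, t, rfl⟩ := List.append_of_mem hx
  simp only [List.pairwise_append, List.pairwise_cons, List.mem_cons] at hl
  have hs : s.prod * x = (-1 : ℤˣ) ^ s.length • (x * s.prod) :=
    List.prod_mul_of_forall_anticomm fun a ha => hl.2.2 a ha x (Or.inl rfl)
  have ht : t.prod * x = (-1 : ℤˣ) ^ t.length • (x * t.prod) :=
    List.prod_mul_of_forall_anticomm fun b hb => by rw [hl.2.1.1 b hb, neg_neg]
  have hL : (s ++ x :: t).prod * x = (-1 : ℤˣ) ^ t.length • (s.prod * x * (x * t.prod)) := by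
    simp only [List.prod_append, List.prod_cons, mul_assoc, ht, mul_smul_comm]
  have hR : x * (s ++ x :: t).prod = (-1 : ℤˣ) ^ s.length • (s.prod * x * (x * t.prod)) := by
    have hs' : x * s.prod = (-1 : ℤˣ) ^ s.length • (s.prod * x) := by
      rw [hs, smul_smul, ← pow_add, ← two_mul, pow_mul, Int.units_sq, one_pow, one_smul]
    rw [List.prod_append, List.prod_cons, ← mul_assoc, hs', smul_mul_assoc, mul_assoc]
  rw [hL, hR, smul_smul, ← pow_add, List.length_append, List.length_cons,
    show s.length + (t.length + 1) + 1 + s.length = t.length + 2 * (s.length + 1) by ring,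
    pow_add, pow_mul, Int.units_sq, one_pow, mul_one]

theorem List.prod_mul_self_of_pairwise_anticomm {l : List A}
    (hl : l.Pairwise fun a b => a * b = -(b * a)) (h : ∀ a ∈ l, a * a = 1) :
    l.prod * l.prod = (-1 : ℤˣ) ^ l.length.choose 2 • (1 : A) := by
  induction l with
  | nil => simp
  | cons a t ih =>
    rw [List.pairwise_cons] at hl
    rw [List.forall_mem_cons] at h
    have ht : t.prod * a = (-1 : ℤˣ) ^ t.length • (a * t.prod) :=
      List.prod_mul_of_forall_anticomm fun b hb => by rw [hl.1 b hb, neg_neg]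
    calc (a :: t).prod * (a :: t).prod = a * (t.prod * a) * t.prod := by
          simp only [List.prod_cons, mul_assoc]
      _ = (-1 : ℤˣ) ^ t.length • (a * a * (t.prod * t.prod)) := by
          rw [ht, mul_smul_comm, smul_mul_assoc, mul_assoc, mul_assoc, mul_assoc]
      _ = (-1 : ℤˣ) ^ (a :: t).length.choose 2 • (1 : A) := by
          rw [h.1, one_mul, ih hl.2 h.2, smul_smul, ← pow_add, List.length_cons,
            Nat.choose_succ_succ', Nat.choose_one_right]

end AnticommutingProducts

namespace QuadraticMap
variable {R ι ι₁ ι₂ : Type*} [CommRing R] [Fintype ι] [Fintype ι₁] [Fintype ι₂]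

theorem weightedSumSquares_single [DecidableEq ι] {w : ι → R} (i : ι) :
    weightedSumSquares R w (Pi.single i 1) = w i := by
  simp [weightedSumSquares_apply, Pi.single_apply]

theorem isOrtho_weightedSumSquares_single [DecidableEq ι] {w : ι → R} {i j : ι} (h : i ≠ j) :
    (weightedSumSquares R w).IsOrtho (Pi.single i 1) (Pi.single j 1) := by
  rw [isOrtho_def, weightedSumSquares_single, weightedSumSquares_single, weightedSumSquares_apply,
    Fintype.sum_eq_add i j h]
  · simp [h, h.symm]
  · intro k hk
    simp [hk.1, hk.2]

def weightedSumSquaresReindex (w : ι → R) (e : ι₁ ≃ ι) :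
    (weightedSumSquares R w).IsometryEquiv (weightedSumSquares R (w ∘ e)) where
  toLinearEquiv := LinearEquiv.funCongrLeft R R e
  map_app' v := by
    simp only [weightedSumSquares_apply, Function.comp_apply]
    exact e.sum_comp fun i => w i • (v i * v i)

def weightedSumSquaresSumElim (w₁ : ι₁ → R) (w₂ : ι₂ → R) :
    (weightedSumSquares R (Sum.elim w₁ w₂)).IsometryEquiv
      ((weightedSumSquares R w₁).prod (weightedSumSquares R w₂)) where
  toLinearEquiv := LinearEquiv.sumArrowLequivProdArrow ι₁ ι₂ R R
  map_app' v := by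
    simp [weightedSumSquares_apply, Fintype.sum_sum_type]

end QuadraticMap

namespace CliffordAlgebra

section TwistedProduct
variable {R M₁ M₂ : Type*} [CommRing R] [AddCommGroup M₁] [Module R M₁]
  [AddCommGroup M₂] [Module R M₂] {Q₁ : QuadraticForm R M₁} {Q₂ : QuadraticForm R M₂}

structure IsTwistingElement (ω : CliffordAlgebra Q₂) : Prop where
  mem_even : ω ∈ evenOdd Q₂ 0
  mul_self : ω * ω = 1
  mul_ι : ∀ m, ω * ι Q₂ m = -(ι Q₂ m * ω)

theorem commute_of_commute_ι {A : Type*} [Ring A] [Algebra R A]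
    {f : CliffordAlgebra Q₁ →ₐ[R] A} {g : CliffordAlgebra Q₂ →ₐ[R] A}
    (h : ∀ m₁ m₂, Commute (f (ι Q₁ m₁)) (g (ι Q₂ m₂))) (x : CliffordAlgebra Q₁)
    (y : CliffordAlgebra Q₂) : Commute (f x) (g y) := by
  induction x using CliffordAlgebra.induction with
  | algebraMap r => rw [AlgHom.commutes]; exact Algebra.commute_algebraMap_left r _
  | ι m₁ =>
    induction y using CliffordAlgebra.induction with
    | algebraMap r => rw [AlgHom.commutes]; exact Algebra.commute_algebraMap_right r _
    | ι m₂ => exact h m₁ m₂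
    | mul a b ha hb => rw [map_mul]; exact ha.mul_right hb
    | add a b ha hb => rw [map_add]; exact ha.add_right hb
  | mul a b ha hb => rw [map_mul]; exact ha.mul_left hb
  | add a b ha hb => rw [map_add]; exact ha.add_left hb

section
variable (Q₁) {ω : CliffordAlgebra Q₂}

def prodToTensorOfTwist (hω : IsTwistingElement ω) :
    CliffordAlgebra (Q₁.prod Q₂) →ₐ[R] CliffordAlgebra Q₁ ⊗[R] CliffordAlgebra Q₂ :=
  lift _ ⟨((TensorProduct.mk R _ _).flip ω ∘ₗ ι Q₁).coprod (TensorProduct.mk R _ _ 1 ∘ₗ ι Q₂),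
    fun m => by
      obtain ⟨m₁, m₂⟩ := m
      simp only [LinearMap.coprod_apply, LinearMap.coe_comp, Function.comp_apply,
        LinearMap.flip_apply, TensorProduct.mk_apply, add_mul, mul_add,
        Algebra.TensorProduct.tmul_mul_tmul, one_mul, mul_one, ι_sq_scalar, hω.mul_self, hω.mul_ι,
        QuadraticMap.prod_apply, map_add]
      rw [TensorProduct.tmul_neg, add_add_neg_add_cancel]
      simp [Algebra.algebraMap_eq_smul_one, TensorProduct.smul_tmul', TensorProduct.tmul_smul,
        Algebra.TensorProduct.one_def]⟩

theorem prodToTensorOfTwist_ι (hω : IsTwistingElement ω) (m : M₁ × M₂) :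
    prodToTensorOfTwist Q₁ hω (ι _ m) = ι Q₁ m.1 ⊗ₜ ω + 1 ⊗ₜ ι Q₂ m.2 :=
  lift_ι_apply _ _ _

theorem prodToTensorOfTwist_map_inr (hω : IsTwistingElement ω) (x : CliffordAlgebra Q₂) :
    prodToTensorOfTwist Q₁ hω (map (.inr Q₁ Q₂) x) = 1 ⊗ₜ x := by
  have h : (prodToTensorOfTwist Q₁ hω).comp (map (.inr Q₁ Q₂)) =
      Algebra.TensorProduct.includeRight := by
    ext m₂
    simp [prodToTensorOfTwist_ι]
  exact AlgHom.congr_fun h x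

local notation "ω'" => map (QuadraticMap.Isometry.inr Q₁ Q₂) ω

theorem commute_ι_inl_map_inr (hω : ω ∈ evenOdd Q₂ 0) (m₁ : M₁) :
    Commute (ι (Q₁.prod Q₂) (m₁, 0)) ω' := by
  simpa using commute_map_mul_map_of_isOrtho_of_mem_evenOdd_zero_right
    (f₁ := .inl Q₁ Q₂) (f₂ := .inr Q₁ Q₂) (fun x y => QuadraticMap.IsOrtho.inl_inr x y)
    (ι Q₁ m₁) ω (ι_mem_evenOdd_one Q₁ m₁) hω

theorem map_inr_mul_ι_inr (hω : IsTwistingElement ω) (m₂ : M₂) :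
    ω' * ι (Q₁.prod Q₂) (0, m₂) = -(ι (Q₁.prod Q₂) (0, m₂) * ω') := by
  simpa using congrArg (map (QuadraticMap.Isometry.inr Q₁ Q₂)) (hω.mul_ι m₂)

def twistedInl (hω : IsTwistingElement ω) :
    CliffordAlgebra Q₁ →ₐ[R] CliffordAlgebra (Q₁.prod Q₂) :=
  lift Q₁ ⟨LinearMap.mulRight R ω' ∘ₗ ι _ ∘ₗ LinearMap.inl R _ _, fun m₁ => by
    have h := commute_ι_inl_map_inr Q₁ hω.mem_even m₁
    simp only [LinearMap.coe_comp, Function.comp_apply, LinearMap.inl_apply,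
      LinearMap.mulRight_apply]
    rw [h.symm.mul_mul_mul_comm, ← map_mul (map (.inr Q₁ Q₂)), hω.mul_self, map_one, mul_one,
      ι_sq_scalar]
    simp⟩

theorem twistedInl_ι (hω : IsTwistingElement ω) (m₁ : M₁) :
    twistedInl Q₁ hω (ι Q₁ m₁) = ι (Q₁.prod Q₂) (m₁, 0) * ω' :=
  lift_ι_apply _ _ _

def tensorToProdOfTwist (hω : IsTwistingElement ω) :
    CliffordAlgebra Q₁ ⊗[R] CliffordAlgebra Q₂ →ₐ[R] CliffordAlgebra (Q₁.prod Q₂) :=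
  Algebra.TensorProduct.lift (twistedInl Q₁ hω) (map (.inr Q₁ Q₂))
    (commute_of_commute_ι fun m₁ m₂ => by
      rw [twistedInl_ι, map_apply_ι, QuadraticMap.Isometry.inr_apply, Commute, SemiconjBy,
        mul_assoc, map_inr_mul_ι_inr Q₁ hω, mul_neg, ← mul_assoc,
        ι_mul_ι_comm_of_isOrtho (QuadraticMap.IsOrtho.inl_inr m₁ m₂), neg_mul, neg_neg, mul_assoc])

def prodEquivTensorOfTwist (hω : IsTwistingElement ω) :
    CliffordAlgebra (Q₁.prod Q₂) ≃ₐ[R] CliffordAlgebra Q₁ ⊗[R] CliffordAlgebra Q₂ :=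
  AlgEquiv.ofAlgHom (prodToTensorOfTwist Q₁ hω) (tensorToProdOfTwist Q₁ hω)
    (by
      ext m
      · simp [tensorToProdOfTwist, twistedInl_ι, prodToTensorOfTwist_ι,
          prodToTensorOfTwist_map_inr, hω.mul_self]
      · simp [tensorToProdOfTwist, prodToTensorOfTwist_ι])
    (by
      ext m
      · simp [tensorToProdOfTwist, twistedInl_ι, prodToTensorOfTwist_ι, mul_assoc,
          ← map_mul (map (.inr Q₁ Q₂)), hω.mul_self]
      · simp [tensorToProdOfTwist, prodToTensorOfTwist_ι])

end

end TwistedProduct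

section VolumeElement
open QuadraticMap
variable {R : Type*} [CommRing R] {n : ℕ}

def volumeElement (w : Fin n → R) : CliffordAlgebra (weightedSumSquares R w) :=
  ((List.finRange n).map fun i => ι _ (Pi.single i 1)).prod

variable {w : Fin n → R}

theorem pairwise_anticomm_ι_single :
    ((List.finRange n).map fun i => ι (weightedSumSquares R w) (Pi.single i 1)).Pairwise
      fun a b => a * b = -(b * a) :=
  List.pairwise_map.mpr <| (List.nodup_finRange n).imp fun h =>
    ι_mul_ι_comm_of_isOrtho (isOrtho_weightedSumSquares_single h)

theorem volumeElement_mem_evenOdd : volumeElement w ∈ evenOdd _ (n : ZMod 2) := by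
  simpa [volumeElement] using SetLike.list_prod_map_mem_graded (List.finRange n)
    (fun _ => (1 : ZMod 2)) _ fun i _ => ι_mem_evenOdd_one (weightedSumSquares R w) (Pi.single i 1)

theorem volumeElement_mul_ι (m : Fin n → R) :
    volumeElement w * ι _ m = (-1 : ℤˣ) ^ (n + 1) • (ι _ m * volumeElement w) := by
  have hsingle (i : Fin n) := List.prod_mul_of_pairwise_anticomm_of_mem pairwise_anticomm_ι_single
    (List.mem_map_of_mem (f := fun i => ι (weightedSumSquares R w) (Pi.single i 1))
      (List.mem_finRange i))
  rw [List.length_map, List.length_finRange] at hsingle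
  rw [pi_eq_sum_univ' m, map_sum, Finset.mul_sum, Finset.sum_mul, Finset.smul_sum]
  refine Finset.sum_congr rfl fun i _ => ?_
  rw [map_smul, mul_smul_comm, volumeElement, hsingle, smul_mul_assoc, smul_comm]

theorem volumeElement_mul_self (hw : ∀ i, w i = 1) :
    volumeElement w * volumeElement w = (-1 : ℤˣ) ^ n.choose 2 • 1 := by
  have h := List.prod_mul_self_of_pairwise_anticomm (pairwise_anticomm_ι_single (w := w)) (by
    simp only [List.forall_mem_map, ι_sq_scalar, weightedSumSquares_single, hw, map_one,
      implies_true])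
  rwa [List.length_map, List.length_finRange] at h

theorem isTwistingElement_volumeElement (hw : ∀ i, w i = 1) (hn : 4 ∣ n) :
    IsTwistingElement (volumeElement w) where
  mem_even := by
    have h2 : (n : ZMod 2) = 0 :=
      (ZMod.natCast_eq_zero_iff n 2).mpr ((by norm_num : 2 ∣ 4).trans hn)
    simpa [h2] using volumeElement_mem_evenOdd (w := w)
  mul_self := by
    obtain ⟨k, rfl⟩ := hn
    have : Even ((4 * k).choose 2) := by
      rw [Nat.choose_two_right, show 4 * k * (4 * k - 1) = 2 * (2 * (k * (4 * k - 1))) by ring,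
        Nat.mul_div_cancel_left _ two_pos]
      exact even_two_mul _
    rw [volumeElement_mul_self hw, this.neg_one_pow, one_smul]
  mul_ι m := by
    have : Odd (n + 1) := by
      obtain ⟨k, rfl⟩ := hn
      exact ⟨2 * k, by ring⟩
    rw [volumeElement_mul_ι, this.neg_one_pow, Units.neg_smul, one_smul]

end VolumeElement

end CliffordAlgebra

-- Keeps `i < p` fixed, shifts `p ≤ i` by `r`, and places the `Fin r` block at `[p, p + r)`.
def finBlockSwap (p q r : ℕ) : Fin (p + q) ⊕ Fin (r + 0) ≃ Fin (p + r + q) :=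
  (Equiv.sumCongr finSumFinEquiv.symm (finCongr (add_zero r))).trans <|
    (Equiv.sumAssoc _ _ _).trans <| (Equiv.sumCongr (.refl _) (Equiv.sumComm _ _)).trans <|
    (Equiv.sumAssoc _ _ _).symm.trans <| (Equiv.sumCongr finSumFinEquiv (.refl _)).trans
    finSumFinEquiv

def signatureWeights (p q : ℕ) : Fin (p + q) → ℝ :=
  fun i => if (i : ℕ) < p then 1 else -1

theorem signatureWeights_comp_finBlockSwap (p q r : ℕ) :
    signatureWeights (p + r) q ∘ finBlockSwap p q r =
      Sum.elim (signatureWeights p q) (signatureWeights r 0) := by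
  ext (i | k)
  · refine Fin.addCases (fun a => ?_) (fun b => ?_) i
    · simp [signatureWeights, finBlockSwap]
      omega
    · simp [signatureWeights, finBlockSwap]
  · simp [signatureWeights, finBlockSwap]

open QuadraticMap QuadraticForm CliffordAlgebra

noncomputable def qpqAddIsometryEquivProd (p q r : ℕ) :
    (Qpq (p + r) q).IsometryEquiv ((Qpq p q).prod (Qpq r 0)) :=
  (weightedSumSquaresReindex (signatureWeights (p + r) q) (finBlockSwap p q r)).trans <|
    (weightedSumSquaresCongr (signatureWeights_comp_finBlockSwap p q r)).trans
      (weightedSumSquaresSumElim _ _)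

noncomputable def qpqAddEquivTensor (p q r : ℕ) (hr : 4 ∣ r) :
    CliffordAlgebra (Qpq (p + r) q) ≃ₐ[ℝ]
      CliffordAlgebra (Qpq p q) ⊗[ℝ] CliffordAlgebra (Qpq r 0) :=
  (equivOfIsometry (qpqAddIsometryEquivProd p q r)).trans <|
    prodEquivTensorOfTwist _ (isTwistingElement_volumeElement (fun i => if_pos i.isLt) hr)

/-- Periodicity theorem: `Cℓ(p+8, q) ≅ Cℓ(p, q) ⊗ Cℓ(8, 0)`. -/
theorem clifford_periodicity (p q : ℕ) :
    Nonempty (CliffordAlgebra (Qpq (p + 8) q) ≃ₐ[ℝ]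
      (CliffordAlgebra (Qpq p q) ⊗[ℝ] CliffordAlgebra (Qpq 8 0))) :=
  ⟨qpqAddEquivTensor p q 8 (by norm_num)⟩
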